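/- arXiv:1508.01498 — 5 statements merged into one kernel-verified Lean document; each statement's English description precedes it below -/
import Mathlib

section
/- For every nonempty finite set F ⊂ ℂ and every ε > 0, one has | (1/|F|)·Σ_{x∈F} ( ∫₀¹ log⁺| x + ε·e^{2πit} | dt − log⁺|x| ) | ≤ ε. -/
/-!
Since `log⁺` is `1`-Lipschitz on `[0, ∞)` and `| ‖x + w‖ - ‖x‖ | ≤ ‖w‖`, moving a point `x` to any
point of the circle of radius `ε` around it changes `log⁺ ‖·‖` by at most `ε`. Averaging over the
circle and then over `F` preserves this bound.
-/

/-- log⁺ -/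
noncomputable def logPlus (t : ℝ) : ℝ := max (Real.log t) 0

open Real Finset

lemma logPlus_eq_posLog : logPlus = posLog :=
  funext fun _ => max_comm _ _

lemma posLog_sub_posLog_le {a b : ℝ} (hb : 0 ≤ b) (hba : b ≤ a) : log⁺ a - log⁺ b ≤ a - b := by
  rw [posLog_eq_log_max_one (hb.trans hba), posLog_eq_log_max_one hb]
  have hB : 1 ≤ max 1 b := le_max_left _ _
  have hBA : max 1 b ≤ max 1 a := max_le_max_left 1 hba
  calc log (max 1 a) - log (max 1 b) = log (max 1 a / max 1 b) :=
        (log_div (by positivity) (by positivity)).symm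
    _ ≤ max 1 a / max 1 b - 1 := log_le_sub_one_of_pos (by positivity)
    _ = (max 1 a - max 1 b) / max 1 b := by field_simp
    _ ≤ max 1 a - max 1 b := div_le_self (sub_nonneg.2 hBA) hB
    _ ≤ a - b := by simp only [max_def]; split_ifs <;> linarith

lemma abs_posLog_sub_posLog_le {a b : ℝ} (ha : 0 ≤ a) (hb : 0 ≤ b) :
    |log⁺ a - log⁺ b| ≤ |a - b| := by
  rcases le_total b a with hba | hab
  · rw [abs_of_nonneg (sub_nonneg.2 (posLog_le_posLog hb hba)), abs_of_nonneg (sub_nonneg.2 hba)]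
    exact posLog_sub_posLog_le hb hba
  · rw [abs_sub_comm, abs_of_nonneg (sub_nonneg.2 (posLog_le_posLog ha hab)), abs_sub_comm,
      abs_of_nonneg (sub_nonneg.2 hab)]
    exact posLog_sub_posLog_le ha hab

lemma abs_posLog_norm_add_sub_le {E : Type*} [SeminormedAddCommGroup E] (x w : E) :
    |log⁺ ‖x + w‖ - log⁺ ‖x‖| ≤ ‖w‖ :=
  calc |log⁺ ‖x + w‖ - log⁺ ‖x‖| ≤ |‖x + w‖ - ‖x‖| :=
        abs_posLog_sub_posLog_le (norm_nonneg _) (norm_nonneg _)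
    _ ≤ ‖x + w - x‖ := abs_norm_sub_norm_le _ _
    _ = ‖w‖ := by rw [add_sub_cancel_left]

lemma abs_intervalIntegral_sub_le {g : ℝ → ℝ} {c ε : ℝ}
    (hg : IntervalIntegrable g MeasureTheory.volume 0 1) (h : ∀ t, |g t - c| ≤ ε) :
    |(∫ t in (0 : ℝ)..1, g t) - c| ≤ ε := by
  have hsub : (∫ t in (0 : ℝ)..1, g t) - c = ∫ t in (0 : ℝ)..1, (g t - c) := by
    simp [intervalIntegral.integral_sub hg intervalIntegrable_const]
  rw [hsub]
  simpa using intervalIntegral.norm_integral_le_of_norm_le_const (a := 0) (b := 1)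
    fun t _ => (norm_eq_abs _).trans_le (h t)

lemma norm_ofReal_mul_exp_two_pi_I_mul {r : ℝ} (hr : 0 ≤ r) (t : ℝ) :
    ‖(r : ℂ) * Complex.exp (2 * π * Complex.I * t)‖ = r := by
  simp [Complex.norm_exp, hr]

theorem statement5 (F : Finset ℂ) (hF : F.Nonempty) (ε : ℝ) (hε : 0 < ε) :
    |(F.card : ℝ)⁻¹ * ∑ x ∈ F,
        ((∫ t in (0:ℝ)..1,
            logPlus (‖x + (ε : ℂ) * Complex.exp (2 * Real.pi * Complex.I * (t : ℂ))‖))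
          - logPlus (‖x‖))| ≤ ε := by
  rw [inv_mul_eq_div, ← expect_eq_sum_div_card, logPlus_eq_posLog]
  refine (abs_expect_le _ _).trans (expect_le hF fun x _ => ?_)
  refine abs_intervalIntegral_sub_le (Continuous.intervalIntegrable (by fun_prop) _ _) fun t => ?_
  exact (abs_posLog_norm_add_sub_le x _).trans_eq (norm_ofReal_mul_exp_two_pi_I_mul hε.le t)
end

section
/- For every nonempty finite set F ⊂ ℂ and every ε > 0, one has (1/|F|²)·Σ_{x∈F} Σ_{x'∈F} ∫₀¹∫₀¹ −log| x + ε·e^{2πit} − x' − ε·e^{2πis} | dt ds ≤ (1/|F|²)·Σ_{x,x'∈F, x≠x'} −log|x−x'| − (log ε)/|F|. -/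
/-!
Integrate over the second circle first: the average of `log ‖w - ·‖` over the circle of radius
`ε` about `b` is `log (max ‖b - w‖ ε)` (the `log⁺` form of Jensen's formula). If the two centres
agree, `w` lies on that circle and the average is `log ε`. If `a ≠ b`, then
`w ↦ log (max ‖b - w‖ ε)` dominates `log ‖· - b‖` except at the single point `b`, so its average
over the circle about `a` is at least `log (max ‖a - b‖ ε) ≥ log ‖a - b‖`.
-/

open Filter Metric Real

theorem integral_unit_interval_eq_circleAverage {E : Type*} [NormedAddCommGroup E]
    [NormedSpace ℝ E] (f : ℂ → E) (c : ℂ) (R : ℝ) :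
    ∫ t in (0:ℝ)..1, f (c + R * Complex.exp (2 * π * Complex.I * t)) = circleAverage f c R := by
  have h := intervalIntegral.integral_comp_mul_left (fun θ ↦ f (circleMap c R θ))
    (a := 0) (b := 1) (mul_ne_zero two_ne_zero pi_ne_zero)
  rw [mul_zero, mul_one] at h
  rw [circleAverage_def, ← h]
  congr! 3 with t
  simp only [circleMap, Complex.ofReal_mul, Complex.ofReal_ofNat]
  ring_nf

theorem circleAverage_log_norm_sub_const_eq_log_max (a c : ℂ) {R : ℝ} (hR : 0 < R) :
    circleAverage (log ‖· - a‖) c R = log (max ‖c - a‖ R) := by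
  rw [circleAverage_log_norm_sub_const_eq_log_radius_add_posLog hR.ne',
    posLog_eq_log_max_one (by positivity), ← log_mul hR.ne' (by positivity),
    mul_max_of_nonneg _ _ hR.le, mul_one, mul_inv_cancel_left₀ hR.ne', max_comm]

theorem circleAverage_log_norm_sub_left (w c : ℂ) {R : ℝ} (hR : 0 < R) :
    circleAverage (fun z ↦ log ‖w - z‖) c R = log (max ‖c - w‖ R) := by
  simp_rw [norm_sub_rev w]
  exact circleAverage_log_norm_sub_const_eq_log_max w c hR

theorem circleAverage_mono_of_eventually_le {f₁ f₂ : ℂ → ℝ} {c : ℂ} {R : ℝ}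
    (hf₁ : CircleIntegrable f₁ c R) (hf₂ : CircleIntegrable f₂ c R) (hR : R ≠ 0)
    (h : f₁ ≤ᶠ[codiscreteWithin (sphere c |R|)] f₂) :
    circleAverage f₁ c R ≤ circleAverage f₂ c R := by
  have hmin : f₁ =ᶠ[codiscreteWithin (sphere c |R|)] fun z ↦ min (f₁ z) (f₂ z) := by
    filter_upwards [h] with z hz using (min_eq_left hz).symm
  rw [circleAverage_congr_codiscreteWithin hmin hR]
  exact circleAverage_mono (hf₁.congr_codiscreteWithin hmin) hf₂ fun z _ ↦ min_le_right _ _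

theorem circleAverage_circleAverage_log_norm_sub_self (a : ℂ) {R : ℝ} (hR : 0 < R) :
    circleAverage (fun w ↦ circleAverage (fun z ↦ log ‖w - z‖) a R) a R = log R := by
  have hsphere : Set.EqOn (fun w ↦ circleAverage (fun z ↦ log ‖w - z‖) a R) (fun _ ↦ log R)
      (sphere a |R|) := by
    intro w hw
    rw [mem_sphere_iff_norm, abs_of_pos hR] at hw
    simp only [circleAverage_log_norm_sub_left _ _ hR, norm_sub_rev a, hw, max_self]
  rw [circleAverage_congr_sphere hsphere, circleAverage_const]

theorem log_norm_sub_le_circleAverage_circleAverage {a b : ℂ} (hab : a ≠ b) {R : ℝ}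
    (hR : 0 < R) :
    log ‖a - b‖ ≤ circleAverage (fun w ↦ circleAverage (fun z ↦ log ‖w - z‖) b R) a R := by
  simp only [circleAverage_log_norm_sub_left _ _ hR]
  have hle : (log ‖· - b‖) ≤ᶠ[codiscreteWithin (sphere a |R|)] fun w ↦ log (max ‖b - w‖ R) := by
    filter_upwards [compl_singleton_mem_codiscreteWithin b] with w hw
    rw [norm_sub_rev]
    exact log_le_log (norm_pos_iff.2 (sub_ne_zero.2 (Ne.symm hw))) (le_max_left _ _)
  have hcont : Continuous fun w ↦ log (max ‖b - w‖ R) :=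
    (by fun_prop : Continuous fun w ↦ max ‖b - w‖ R).log fun w ↦ (lt_max_of_lt_right hR).ne'
  calc log ‖a - b‖ ≤ log (max ‖a - b‖ R) :=
        log_le_log (norm_pos_iff.2 (sub_ne_zero.2 hab)) (le_max_left _ _)
    _ = circleAverage (log ‖· - b‖) a R :=
        (circleAverage_log_norm_sub_const_eq_log_max b a hR).symm
    _ ≤ _ := circleAverage_mono_of_eventually_le (circleIntegrable_log_norm_sub_const R)
        (hcont.continuousOn.circleIntegrable hR.le) hR.ne' hle

theorem integral_integral_log_norm_sub_eq_circleAverage (a b : ℂ) (R : ℝ) :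
    ∫ t in (0:ℝ)..1, ∫ s in (0:ℝ)..1,
        log ‖(a + R * Complex.exp (2 * π * Complex.I * t))
          - (b + R * Complex.exp (2 * π * Complex.I * s))‖ =
      circleAverage (fun w ↦ circleAverage (fun z ↦ log ‖w - z‖) b R) a R := by
  rw [← integral_unit_interval_eq_circleAverage]
  refine intervalIntegral.integral_congr fun t _ ↦ ?_
  exact integral_unit_interval_eq_circleAverage (fun z ↦ log ‖_ - z‖) b R

theorem Finset.sum_sum_le_card_nsmul_add_sum_sum_erase {α M : Type*} [DecidableEq α]
    [AddCommMonoid M] [PartialOrder M] [IsOrderedAddMonoid M] {s : Finset α}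
    {f g : α → α → M} {d : M} (hdiag : ∀ x ∈ s, f x x ≤ d)
    (hoff : ∀ x ∈ s, ∀ y ∈ s, x ≠ y → f x y ≤ g x y) :
    ∑ x ∈ s, ∑ y ∈ s, f x y ≤ s.card • d + ∑ x ∈ s, ∑ y ∈ s.erase x, g x y := by
  rw [← Finset.sum_const, ← Finset.sum_add_distrib]
  refine Finset.sum_le_sum fun x hx ↦ ?_
  rw [← Finset.add_sum_erase s _ hx]
  exact add_le_add (hdiag x hx) (Finset.sum_le_sum fun y hy ↦
    hoff x hx y (Finset.mem_of_mem_erase hy) (Finset.ne_of_mem_erase hy).symm)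

theorem statement6 (F : Finset ℂ) (hF : F.Nonempty) (ε : ℝ) (hε : 0 < ε) :
    ((F.card : ℝ) ^ 2)⁻¹ * ∑ x ∈ F, ∑ x' ∈ F,
        (∫ t in (0:ℝ)..1, ∫ s in (0:ℝ)..1,
          -Real.log (Norm.norm ((x + (ε : ℂ) * Complex.exp (2 * Real.pi * Complex.I * (t : ℂ)))
            - (x' + (ε : ℂ) * Complex.exp (2 * Real.pi * Complex.I * (s : ℂ)))))) ≤
      ((F.card : ℝ) ^ 2)⁻¹ * (∑ x ∈ F, ∑ x' ∈ F.erase x, -Real.log (Norm.norm (x - x')))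
        - Real.log ε / (F.card : ℝ) := by
  simp only [intervalIntegral.integral_neg, integral_integral_log_norm_sub_eq_circleAverage]
  have hsum := Finset.sum_sum_le_card_nsmul_add_sum_sum_erase (s := F) (d := -log ε)
    (g := fun x x' ↦ -log ‖x - x'‖)
    (fun x _ ↦ neg_le_neg (circleAverage_circleAverage_log_norm_sub_self x hε).ge)
    (fun x _ x' _ hne ↦ neg_le_neg (log_norm_sub_le_circleAverage_circleAverage hne hε))
  have hcard : (0 : ℝ) < F.card := by exact_mod_cast hF.card_pos
  calc _ ≤ ((F.card : ℝ) ^ 2)⁻¹ *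
          (F.card • -log ε + ∑ x ∈ F, ∑ x' ∈ F.erase x, -log ‖x - x'‖) := by gcongr
    _ = _ := by
        rw [nsmul_eq_mul]
        field_simp
        ring
end

section
/- For every real δ with 0 < δ < 1 and every x ∈ ℝ, one has μ_ℝ([x−δ, x+δ]) ≤ 4·√δ. -/
/-! The density is even, and for `z ≥ 0` the estimate `log y ≤ 2 (√y - 1)` at
`y = (z + 1) / |z - 1|`, together with `π² ≥ 8`, bounds it by `(2 √|z - 1|)⁻¹`. So the density is
at most `(2 √|z - 1|)⁻¹ + (2 √|z + 1|)⁻¹`. Each of these integrates over an interval of length `ℓ`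
to at most `√(2ℓ)`, the worst case being an interval centred at the singularity; with `ℓ = 2δ`
this gives `2√δ + 2√δ`. -/

open MeasureTheory

/-- The measure dμ_ℝ(z) = (1/(π² z))·log|(z+1)/(z−1)| dz on ℝ. -/
noncomputable def muR : Measure ℝ :=
  volume.withDensity fun z => ENNReal.ofReal (1 / (Real.pi ^ 2 * z) * Real.log |(z + 1) / (z - 1)|)

open Real Set

theorem Real.sqrt_sub_sqrt_le_sqrt_sub {x y : ℝ} (hy : 0 ≤ y) (hyx : y ≤ x) :
    √x - √y ≤ √(x - y) := by
  rw [sub_le_iff_le_add, sqrt_le_iff]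
  refine ⟨by positivity, ?_⟩
  nlinarith [sq_sqrt hy, sq_sqrt (sub_nonneg.2 hyx), sqrt_nonneg y, sqrt_nonneg (x - y)]

theorem Real.sqrt_add_sqrt_le {x y : ℝ} (hx : 0 ≤ x) (hy : 0 ≤ y) :
    √x + √y ≤ √(2 * (x + y)) := by
  rw [le_sqrt (by positivity) (by positivity)]
  nlinarith [sq_sqrt hx, sq_sqrt hy, sq_nonneg (√x - √y)]

/-- `sign t * √|t|`, written using that `√` vanishes on negative numbers. -/
noncomputable def signedSqrt (t : ℝ) : ℝ := √t - √(-t)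

theorem hasDerivAt_signedSqrt {t : ℝ} (ht : t ≠ 0) :
    HasDerivAt signedSqrt (2 * √|t|)⁻¹ t := by
  refine ((hasDerivAt_sqrt ht).sub
    ((hasDerivAt_sqrt (neg_ne_zero.2 ht)).comp t (hasDerivAt_neg t))).congr_deriv ?_
  rcases ht.lt_or_gt with ht | ht
  · simp [abs_of_neg ht, sqrt_eq_zero'.2 ht.le]
  · simp [abs_of_pos ht, sqrt_eq_zero'.2 (neg_nonpos.2 ht.le)]

theorem signedSqrt_sub_le {a b : ℝ} (hab : a ≤ b) :
    signedSqrt b - signedSqrt a ≤ √(2 * (b - a)) := by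
  unfold signedSqrt
  rcases le_or_gt 0 a with ha | ha
  · rw [sqrt_eq_zero'.2 (by linarith : -b ≤ 0), sqrt_eq_zero'.2 (by linarith : -a ≤ 0)]
    calc √b - 0 - (√a - 0) ≤ √(b - a) := by linarith [sqrt_sub_sqrt_le_sqrt_sub ha hab]
      _ ≤ √(2 * (b - a)) := sqrt_le_sqrt (by linarith)
  rcases le_or_gt b 0 with hb | hb
  · rw [sqrt_eq_zero'.2 hb, sqrt_eq_zero'.2 ha.le]
    calc 0 - √(-b) - (0 - √(-a)) ≤ √(-a - -b) := by
          linarith [sqrt_sub_sqrt_le_sqrt_sub (neg_nonneg.2 hb) (neg_le_neg hab)]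
      _ ≤ √(2 * (b - a)) := sqrt_le_sqrt (by linarith)
  · rw [sqrt_eq_zero'.2 (by linarith : -b ≤ 0), sqrt_eq_zero'.2 ha.le]
    simpa [sub_eq_add_neg] using sqrt_add_sqrt_le hb.le (neg_nonneg.2 ha.le)

theorem intervalIntegrable_inv_two_mul_sqrt_abs (a b : ℝ) :
    IntervalIntegrable (fun t => (2 * √|t|)⁻¹) volume a b := by
  have hbound (t : ℝ) : ‖(2 * √|t|)⁻¹‖ ≤ 1 / 2 * ‖t‖ ^ (-(1 / 2 : ℝ)) := by
    rw [norm_of_nonneg (by positivity), norm_eq_abs, rpow_neg (abs_nonneg t), ← sqrt_eq_rpow,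
      mul_inv, one_div]
  have h : LocallyIntegrable (fun t : ℝ => (2 * √|t|)⁻¹) :=
    locallyIntegrable_of_norm_le_rpow (by simp) (by norm_num) (ae_of_all _ hbound) (by fun_prop)
  exact (h.integrableOn_isCompact isCompact_uIcc).intervalIntegrable

theorem integral_inv_two_mul_sqrt_abs (a b : ℝ) :
    ∫ t in a..b, (2 * √|t|)⁻¹ = signedSqrt b - signedSqrt a :=
  integral_eq_of_hasDerivAt_off_countable _ _ (countable_singleton 0)
    (by unfold signedSqrt; fun_prop) (fun _ ht => hasDerivAt_signedSqrt ht.2)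
    (intervalIntegrable_inv_two_mul_sqrt_abs a b)

theorem lintegral_Icc_inv_two_mul_sqrt_abs_sub_le (c : ℝ) {a b : ℝ} (hab : a ≤ b) :
    ∫⁻ z in Icc a b, ENNReal.ofReal (2 * √|z - c|)⁻¹ ≤ ENNReal.ofReal √(2 * (b - a)) := by
  have hint : IntervalIntegrable (fun z => (2 * √|z - c|)⁻¹) volume a b := by
    simpa using (intervalIntegrable_inv_two_mul_sqrt_abs (a - c) (b - c)).comp_sub_right c
  rw [← ofReal_integral_eq_lintegral_ofReal
      ((intervalIntegrable_iff_integrableOn_Icc_of_le hab).1 hint)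
      (ae_of_all _ fun z => by positivity),
    integral_Icc_eq_integral_Ioc, ← intervalIntegral.integral_of_le hab,
    intervalIntegral.integral_comp_sub_right (fun t => (2 * √|t|)⁻¹),
    integral_inv_two_mul_sqrt_abs]
  exact ENNReal.ofReal_le_ofReal (by simpa using signedSqrt_sub_le (sub_le_sub_right hab c))

noncomputable def muRDensity (z : ℝ) : ℝ := 1 / (π ^ 2 * z) * log |(z + 1) / (z - 1)|

theorem muRDensity_neg (z : ℝ) : muRDensity (-z) = muRDensity z := by
  have h : (-z + 1) / (-z - 1) = ((z + 1) / (z - 1))⁻¹ := by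
    rw [inv_div, ← neg_div_neg_eq]; ring_nf
  rw [muRDensity, muRDensity, h, abs_inv, log_inv]
  ring

theorem Real.log_le_two_mul_sqrt_sub_one {y : ℝ} (hy : 0 < y) : log y ≤ 2 * (√y - 1) := by
  have h := log_le_sub_one_of_pos (sqrt_pos.2 hy)
  rw [log_sqrt hy.le] at h
  linarith

theorem muRDensity_le_of_nonneg {z : ℝ} (hz : 0 ≤ z) : muRDensity z ≤ (2 * √|z - 1|)⁻¹ := by
  rcases hz.eq_or_lt with rfl | hz
  · simp [muRDensity]
  rcases eq_or_ne z 1 with rfl | hz1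
  · simp [muRDensity] -- both sides vanish: `log 0 = 0` and `0⁻¹ = 0`
  set t := √|z - 1| with ht_def
  have hu : 0 < |z - 1| := abs_pos.2 (sub_ne_zero.2 hz1)
  have ht : 0 < t := sqrt_pos.2 hu
  have hs : 1 ≤ √(z + 1) := one_le_sqrt.2 (by linarith)
  -- `√(z + 1) - t ≤ (z + 1) - t²` because `√(z + 1) + t ≥ 1`
  have hst : √(z + 1) - t ≤ 2 * z := by
    have hdiff : z + 1 - |z - 1| ≤ 2 * z := by linarith [neg_abs_le (z - 1)]
    nlinarith [sq_sqrt (by linarith : 0 ≤ z + 1), sq_sqrt hu.le]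
  have hlog : log |(z + 1) / (z - 1)| ≤ 4 * z / t := by
    rw [abs_div, abs_of_pos (by linarith : 0 < z + 1)]
    calc log ((z + 1) / |z - 1|) ≤ 2 * (√((z + 1) / |z - 1|) - 1) :=
          log_le_two_mul_sqrt_sub_one (by positivity)
      _ = 2 * (√(z + 1) - t) / t := by rw [sqrt_div (by linarith), ← ht_def]; field_simp
      _ ≤ 4 * z / t := div_le_div_of_nonneg_right (by linarith) ht.le
  have hπ : 8 ≤ π ^ 2 := by nlinarith [pi_gt_three]
  calc muRDensity z ≤ 1 / (π ^ 2 * z) * (4 * z / t) :=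
        mul_le_mul_of_nonneg_left hlog (by positivity)
    _ = 4 / (π ^ 2 * t) := by field_simp
    _ ≤ (2 * t)⁻¹ := by
        rw [inv_eq_one_div, div_le_div_iff₀ (by positivity) (by positivity)]
        nlinarith

theorem muRDensity_le (z : ℝ) : muRDensity z ≤ (2 * √|z - 1|)⁻¹ + (2 * √|z + 1|)⁻¹ := by
  rcases le_total 0 z with hz | hz
  · linarith [muRDensity_le_of_nonneg hz, (by positivity : 0 ≤ (2 * √|z + 1|)⁻¹)]
  · have h := muRDensity_le_of_nonneg (neg_nonneg.2 hz)
    rw [muRDensity_neg, show -z - 1 = -(z + 1) by ring, abs_neg] at h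
    linarith [(by positivity : 0 ≤ (2 * √|z - 1|)⁻¹)]

theorem statement9_general (δ : ℝ) (hδ0 : 0 < δ) (x : ℝ) :
    muR (Set.Icc (x - δ) (x + δ)) ≤ ENNReal.ofReal (4 * Real.sqrt δ) := by
  have hI (c : ℝ) := lintegral_Icc_inv_two_mul_sqrt_abs_sub_le c (by linarith : x - δ ≤ x + δ)
  have hlen : √(2 * (x + δ - (x - δ))) = 2 * √δ := by
    rw [show 2 * (x + δ - (x - δ)) = 2 ^ 2 * δ by ring, sqrt_mul (by norm_num), sqrt_sq zero_le_two]
  simp only [hlen] at hI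
  calc muR (Icc (x - δ) (x + δ))
      = ∫⁻ z in Icc (x - δ) (x + δ), ENNReal.ofReal (muRDensity z) :=
        withDensity_apply _ measurableSet_Icc
    _ ≤ ∫⁻ z in Icc (x - δ) (x + δ),
          (ENNReal.ofReal (2 * √|z - 1|)⁻¹ + ENNReal.ofReal (2 * √|z + 1|)⁻¹) :=
        lintegral_mono fun z => by
          rw [← ENNReal.ofReal_add (by positivity) (by positivity)]
          exact ENNReal.ofReal_le_ofReal (muRDensity_le z)
    _ = (∫⁻ z in Icc (x - δ) (x + δ), ENNReal.ofReal (2 * √|z - 1|)⁻¹) +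
          ∫⁻ z in Icc (x - δ) (x + δ), ENNReal.ofReal (2 * √|z + 1|)⁻¹ :=
        lintegral_add_left (by fun_prop) _
    _ ≤ ENNReal.ofReal (2 * √δ) + ENNReal.ofReal (2 * √δ) :=
        add_le_add (hI 1) (by simpa using hI (-1))
    _ = ENNReal.ofReal (4 * √δ) := by
        rw [← ENNReal.ofReal_add (by positivity) (by positivity)]
        ring_nf

theorem statement9 (δ : ℝ) (hδ0 : 0 < δ) (hδ1 : δ < 1) (x : ℝ) :
    muR (Set.Icc (x - δ) (x + δ)) ≤ ENNReal.ofReal (4 * Real.sqrt δ) :=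
  statement9_general δ hδ0 x
end

section
/- For every real y with 0 < y < 1 and all x, z ∈ ℝ with |x−z| ≥ √y, one has log( 1 + y²/(x−z)² ) ≤ y·log( 1 + 1/(x−z)² ). -/
/-!
Put `t = 1 / (x - z)²`, so that `0 ≤ t ≤ 1 / y`; the claim is `1 + y² t ≤ (1 + t) ^ y`. Since
`t ↦ (1 + t) ^ y` is concave, on `[0, 1 / y]` it lies above its chord, and the chord lies above the
line `1 + y² t` because at the right endpoint `(1 + 1 / y) ^ y ≥ 1 + y`; in logarithms this endpoint
inequality reads `(1 - y) log (1 + y) + y log y ≤ 0`, which follows from `log u ≤ u - 1`.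
-/

open Real

namespace Real

lemma one_add_le_one_add_inv_rpow_self {y : ℝ} (hy0 : 0 < y) (hy1 : y ≤ 1) :
    1 + y ≤ (1 + y⁻¹) ^ y := by
  rw [le_rpow_iff_log_le (by positivity) (by positivity),
    show 1 + y⁻¹ = (1 + y) / y by field_simp; ring, log_div (by positivity) hy0.ne']
  have hlog_one_add : log (1 + y) ≤ y := by
    linarith [log_le_sub_one_of_pos (show 0 < 1 + y by positivity)]
  have hlog : log y ≤ y - 1 := log_le_sub_one_of_pos hy0
  nlinarith

lemma one_add_sq_mul_le_one_add_rpow {y t : ℝ} (hy0 : 0 < y) (hy1 : y ≤ 1) (ht : 0 ≤ t)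
    (hyt : y * t ≤ 1) : 1 + y ^ 2 * t ≤ (1 + t) ^ y := by
  have hchord := (concaveOn_rpow hy0.le hy1).2 (Set.mem_Ici.2 zero_le_one)
    (Set.mem_Ici.2 (by positivity : (0 : ℝ) ≤ 1 + y⁻¹)) (sub_nonneg.2 hyt)
    (by positivity : 0 ≤ y * t) (sub_add_cancel 1 (y * t))
  simp only [smul_eq_mul, one_rpow, mul_one] at hchord
  have hpoint : 1 - y * t + y * t * (1 + y⁻¹) = 1 + t := by field_simp; ring
  rw [hpoint] at hchord
  calc 1 + y ^ 2 * t = 1 - y * t + y * t * (1 + y) := by ring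
    _ ≤ 1 - y * t + y * t * (1 + y⁻¹) ^ y := by
      gcongr
      exact one_add_le_one_add_inv_rpow_self hy0 hy1
    _ ≤ (1 + t) ^ y := hchord

lemma log_one_add_sq_mul_le_mul_log_one_add {y t : ℝ} (hy0 : 0 < y) (hy1 : y ≤ 1) (ht : 0 ≤ t)
    (hyt : y * t ≤ 1) : log (1 + y ^ 2 * t) ≤ y * log (1 + t) :=
  (le_rpow_iff_log_le (by positivity) (by positivity)).1
    (one_add_sq_mul_le_one_add_rpow hy0 hy1 ht hyt)

end Real

theorem statement10 (y : ℝ) (hy0 : 0 < y) (hy1 : y < 1) (x z : ℝ)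
    (hxz : Real.sqrt y ≤ |x - z|) :
    Real.log (1 + y ^ 2 / (x - z) ^ 2) ≤ y * Real.log (1 + 1 / (x - z) ^ 2) := by
  have hy_le : y ≤ (x - z) ^ 2 := by
    simpa [sq_abs, sq_sqrt hy0.le] using pow_le_pow_left₀ (sqrt_nonneg y) hxz 2
  have hsq_pos : 0 < (x - z) ^ 2 := hy0.trans_le hy_le
  rw [div_eq_mul_one_div (y ^ 2)]
  exact log_one_add_sq_mul_le_mul_log_one_add hy0 hy1.le (by positivity)
    (by rwa [← mul_div_assoc, mul_one, div_le_one hsq_pos])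
end

section
/- Let p be a rational prime, L a finite extension of ℚ_p with ring of integers O, uniformizer π, and residue field of cardinality q, and let |·| be the absolute value on L normalized so that |p| = 1/p. Let μ× be the Haar probability measure on the compact multiplicative group O× of units of O. Then ∫_{O×} −log|1−y| dμ×(y) = −q·log|π|/(q−1)². -/
open MeasureTheory

/-- The ring of integers (closed unit ball) of an ultrametric normed field. -/
noncomputable def ringOfIntegers (L : Type*) [NormedField L] [IsUltrametricDist L] : Subring L where
  carrier := {x | ‖x‖ ≤ 1}
  mul_mem' := fun {a b} ha hb => by
    simp only [Set.mem_setOf_eq] at *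
    rw [norm_mul]
    exact mul_le_one₀ ha (norm_nonneg b) hb
  one_mem' := by simp
  add_mem' := fun {a b} ha hb => by
    simp only [Set.mem_setOf_eq] at *
    exact (IsUltrametricDist.norm_add_le_max a b).trans (max_le ha hb)
  zero_mem' := by simp
  neg_mem' := fun {a} ha => by simpa using ha

/-- The maximal ideal (open unit ball) of the ring of integers. -/
noncomputable def maxIdeal (L : Type*) [NormedField L] [IsUltrametricDist L] :
    Ideal (ringOfIntegers L) where
  carrier := {x | ‖(x : L)‖ < 1}
  add_mem' := fun {a b} ha hb => by
    simp only [Set.mem_setOf_eq] at *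
    exact lt_of_le_of_lt (IsUltrametricDist.norm_add_le_max (a : L) b) (max_lt ha hb)
  zero_mem' := by simp
  smul_mem' := fun c x hx => by
    simp only [Set.mem_setOf_eq, smul_eq_mul] at *
    rw [Subring.coe_mul, norm_mul]
    exact lt_of_le_of_lt (mul_le_of_le_one_left (norm_nonneg _) c.2) hx

/-- The residue field cardinality. -/
noncomputable def residueCard (L : Type*) [NormedField L] [IsUltrametricDist L] : ℕ :=
  Nat.card ((ringOfIntegers L) ⧸ maxIdeal L)
/-!
The higher unit groups `U⁽ⁿ⁾ = 1 + πⁿ𝒪` have `[𝒪ˣ : U⁽¹⁾] = q - 1` (reduction modulo `𝔪` maps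
`𝒪ˣ` onto `𝓀ˣ` with kernel `U⁽¹⁾`) and `[U⁽ⁿ⁾ : U⁽ⁿ⁺¹⁾] = q` (`y ↦ (y - 1)/πⁿ mod 𝔪` maps `U⁽ⁿ⁾`
onto `𝓀` with kernel `U⁽ⁿ⁺¹⁾`), so the Haar probability measure gives `U⁽ⁿ⁺¹⁾` mass
`1/((q - 1)qⁿ)`. Away from the null set `{1}`, `-log |1 - y| = -log |π| · #{n ≥ 1 | y ∈ U⁽ⁿ⁾}`,
hence the integral is `-log |π| · ∑ₙ 1/((q - 1)qⁿ) = -q log |π| / (q - 1)²`.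
The residue field is finite because the unit ball of the finite-dimensional `ℚ_p`-space `L` is
compact.
-/

open scoped ENNReal

instance Units.instMeasurableMul {M : Type*} [Monoid M] [MeasurableSpace M] [MeasurableMul M] :
    MeasurableMul Mˣ where
  measurable_const_mul c :=
    measurable_comap_iff.2 <| (measurable_const_mul (c : M)).comp (comap_measurable _)
  measurable_mul_const c :=
    measurable_comap_iff.2 <| (measurable_mul_const (c : M)).comp (comap_measurable _)

instance MulMemClass.instMeasurableMul {S M : Type*} [Mul M] [MeasurableSpace M] [MeasurableMul M]
    [SetLike S M] [MulMemClass S M] (s : S) : MeasurableMul s where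
  measurable_const_mul c :=
    ((measurable_const_mul (c : M)).comp measurable_subtype_coe).subtype_mk
  measurable_mul_const c :=
    ((measurable_mul_const (c : M)).comp measurable_subtype_coe).subtype_mk

theorem Subgroup.measure_eq_inv_index {G : Type*} [Group G] [MeasurableSpace G] [MeasurableMul G]
    (μ : Measure G) [IsProbabilityMeasure μ] [μ.IsMulLeftInvariant] (H : Subgroup G)
    (hH : MeasurableSet (H : Set G)) (hindex : H.index ≠ 0) : μ H = (H.index : ℝ≥0∞)⁻¹ := by
  have : H.FiniteIndex := ⟨hindex⟩
  refine ENNReal.eq_inv_of_mul_eq_one_left ?_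
  rw [mul_comm, H.index_mul_measure hH μ, measure_univ]

theorem tsum_inv_sub_one_mul_pow {q : ℝ} (hq : 1 < q) :
    ∑' n : ℕ, ((q - 1) * q ^ n)⁻¹ = q / (q - 1) ^ 2 := by
  simp_rw [mul_inv, ← inv_pow]
  rw [tsum_mul_left, tsum_geometric_of_lt_one (by positivity) (inv_lt_one_of_one_lt₀ hq)]
  field_simp

structure IsUniformizer {L : Type*} [NormedField L] (π : L) : Prop where
  ne_zero : π ≠ 0
  norm_lt_one : ‖π‖ < 1
  exists_norm_eq_zpow : ∀ x : L, x ≠ 0 → ∃ n : ℤ, ‖x‖ = ‖π‖ ^ n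

namespace IsUniformizer

variable {L : Type*} [NormedField L] {π : L} (hπ : IsUniformizer π)
include hπ

theorem norm_pos : 0 < ‖π‖ := norm_pos_iff.2 hπ.ne_zero

theorem norm_lt_iff_le_mul {x a : L} (ha : a ≠ 0) : ‖x‖ < ‖a‖ ↔ ‖x‖ ≤ ‖π‖ * ‖a‖ := by
  rcases eq_or_ne x 0 with rfl | hx
  · simp [norm_pos_iff.2 ha, mul_nonneg hπ.norm_pos.le (norm_nonneg a)]
  obtain ⟨m, hm⟩ := hπ.exists_norm_eq_zpow x hx
  obtain ⟨k, hk⟩ := hπ.exists_norm_eq_zpow a ha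
  rw [hm, hk, ← zpow_one_add₀ hπ.norm_pos.ne',
    zpow_lt_zpow_iff_right_of_lt_one₀ hπ.norm_pos hπ.norm_lt_one,
    zpow_le_zpow_iff_right_of_lt_one₀ hπ.norm_pos hπ.norm_lt_one]
  omega

theorem exists_norm_eq_pow {x : L} (hx : x ≠ 0) (hx1 : ‖x‖ ≤ 1) : ∃ m : ℕ, ‖x‖ = ‖π‖ ^ m := by
  obtain ⟨m, hm⟩ := hπ.exists_norm_eq_zpow x hx
  lift m to ℕ using (zpow_le_zpow_iff_right_of_lt_one₀ hπ.norm_pos hπ.norm_lt_one).1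
    (by rwa [zpow_zero, ← hm])
  exact ⟨m, by simp [hm]⟩

end IsUniformizer

local notation "𝒪" L:max => ringOfIntegers L
local notation "𝓀" L:max => ringOfIntegers L ⧸ maxIdeal L

namespace ringOfIntegers

variable {L : Type*} [NormedField L] [IsUltrametricDist L]

theorem mem_iff {x : L} : x ∈ 𝒪 L ↔ ‖x‖ ≤ 1 := Iff.rfl

theorem norm_coe_le_one (x : 𝒪 L) : ‖(x : L)‖ ≤ 1 := x.2

theorem mem_maxIdeal_iff {x : 𝒪 L} : x ∈ maxIdeal L ↔ ‖(x : L)‖ < 1 := Iff.rfl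

theorem norm_coe_units (y : (𝒪 L)ˣ) : ‖((y : 𝒪 L) : L)‖ = 1 := by
  have hmul : ‖((y : 𝒪 L) : L)‖ * ‖((y⁻¹ : (𝒪 L)ˣ) : L)‖ = 1 := by
    rw [← norm_mul, ← Subring.coe_mul, Units.mul_inv, OneMemClass.coe_one, norm_one]
  nlinarith [norm_coe_le_one (y : 𝒪 L), norm_coe_le_one ((y⁻¹ : (𝒪 L)ˣ) : 𝒪 L),
    norm_nonneg ((y : 𝒪 L) : L)]

theorem coe_units_inv (y : (𝒪 L)ˣ) : (((y⁻¹ : (𝒪 L)ˣ) : 𝒪 L) : L) = ((y : 𝒪 L) : L)⁻¹ :=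
  eq_inv_of_mul_eq_one_right <| by rw [← Subring.coe_mul, Units.mul_inv, OneMemClass.coe_one]

theorem norm_one_sub_coe_units_le_one (y : (𝒪 L)ˣ) : ‖1 - ((y : 𝒪 L) : L)‖ ≤ 1 := by
  have := norm_coe_le_one (1 - (y : 𝒪 L))
  push_cast at this
  exact this

theorem isUnit_of_norm_eq_one {x : 𝒪 L} (hx : ‖(x : L)‖ = 1) : IsUnit x := by
  have hx0 : (x : L) ≠ 0 := by rintro h; simp [h] at hx
  refine isUnit_iff_exists_inv.2 ⟨⟨(x : L)⁻¹, mem_iff.2 (by simp [hx])⟩, ?_⟩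
  exact Subtype.ext (mul_inv_cancel₀ hx0)

theorem norm_eq_one_of_notMem_maxIdeal {x : 𝒪 L} (hx : x ∉ maxIdeal L) : ‖(x : L)‖ = 1 :=
  le_antisymm x.2 (not_lt.1 hx)

instance maxIdeal_isMaximal : (maxIdeal L).IsMaximal := by
  refine Ideal.isMaximal_iff.2
    ⟨fun h => (mem_maxIdeal_iff.1 h).ne (by simp), fun J x _ hx hxJ => ?_⟩
  exact (Ideal.eq_top_of_isUnit_mem J hxJ
    (isUnit_of_norm_eq_one (norm_eq_one_of_notMem_maxIdeal hx))).symm ▸ Submodule.mem_top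

noncomputable instance : Field (𝓀 L) := Ideal.Quotient.field _

theorem mk_eq_mk_iff {x y : 𝒪 L} :
    Ideal.Quotient.mk (maxIdeal L) x = Ideal.Quotient.mk (maxIdeal L) y ↔ ‖(x : L) - y‖ < 1 := by
  rw [Ideal.Quotient.eq, mem_maxIdeal_iff, AddSubgroupClass.coe_sub]

theorem finite_residueField [ProperSpace L] : Finite (𝓀 L) := by
  obtain ⟨t, hts, ht, hcover⟩ :=
    finite_cover_balls_of_compact (isCompact_closedBall (0 : L) 1) zero_lt_one
  have : Finite t := ht.to_subtype
  refine Finite.of_surjective (fun z : t =>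
    Ideal.Quotient.mk (maxIdeal L) ⟨z, mem_iff.2 (by simpa using hts z.2)⟩) fun c => ?_
  obtain ⟨x, rfl⟩ := Ideal.Quotient.mk_surjective c
  obtain ⟨z, hz, hxz⟩ := Set.mem_iUnion₂.1 (hcover (mem_closedBall_zero_iff.2 x.2))
  exact ⟨⟨z, hz⟩, (mk_eq_mk_iff.2 (by rwa [Metric.mem_ball, dist_eq_norm] at hxz)).symm⟩

/-- `1 + a𝒪`, i.e. `U⁽ⁿ⁾` for `a = πⁿ`. -/
def higherUnits (a : L) : Subgroup (𝒪 L)ˣ where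
  carrier := {y | ‖1 - ((y : 𝒪 L) : L)‖ ≤ ‖a‖}
  one_mem' := by simp
  mul_mem' {y z} hy hz := by
    have h : 1 - ((y * z : (𝒪 L)ˣ) : L) = (1 - y) + y * (1 - z) := by push_cast; ring
    change ‖1 - ((y * z : (𝒪 L)ˣ) : L)‖ ≤ ‖a‖
    refine h ▸ (IsUltrametricDist.norm_add_le_max _ _).trans (max_le hy ?_)
    rwa [norm_mul, norm_coe_units, one_mul]
  inv_mem' {y} hy := by
    have h : 1 - ((y : 𝒪 L) : L)⁻¹ = -((y : 𝒪 L) : L)⁻¹ * (1 - y) := by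
      field_simp [(norm_pos_iff.1 ((norm_coe_units y).symm ▸ one_pos) : ((y : 𝒪 L) : L) ≠ 0)]
      ring
    change ‖1 - (((y⁻¹ : (𝒪 L)ˣ) : 𝒪 L) : L)‖ ≤ ‖a‖
    rwa [coe_units_inv, h, norm_mul, norm_neg, norm_inv, norm_coe_units, inv_one, one_mul]

theorem mem_higherUnits {a : L} {y : (𝒪 L)ˣ} :
    y ∈ higherUnits a ↔ ‖1 - ((y : 𝒪 L) : L)‖ ≤ ‖a‖ := Iff.rfl

theorem higherUnits_mono {a b : L} (h : ‖a‖ ≤ ‖b‖) : higherUnits a ≤ higherUnits b :=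
  fun _ hy => le_trans hy h

theorem measurable_coe_units [MeasurableSpace L] :
    Measurable fun y : (𝒪 L)ˣ => ((y : 𝒪 L) : L) :=
  measurable_subtype_coe.comp (comap_measurable _)

theorem measurableSet_higherUnits [MeasurableSpace L] [BorelSpace L] (a : L) :
    MeasurableSet (higherUnits a : Set (𝒪 L)ˣ) :=
  measurableSet_le (measurable_coe_units.const_sub 1).norm measurable_const

theorem unitsMap_mk_surjective :
    Function.Surjective (Units.map (Ideal.Quotient.mk (maxIdeal L)).toMonoidHom) := by
  intro u
  obtain ⟨x, hx⟩ := Ideal.Quotient.mk_surjective (u : 𝓀 L)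
  have hx1 : ‖(x : L)‖ = 1 := norm_eq_one_of_notMem_maxIdeal fun h =>
    u.ne_zero (hx ▸ Ideal.Quotient.eq_zero_iff_mem.2 h)
  exact ⟨(isUnit_of_norm_eq_one hx1).unit, Units.ext hx⟩

theorem norm_sub_one_div_le_one {a : L} {y : (𝒪 L)ˣ} (hy : y ∈ higherUnits a) :
    ‖(((y : 𝒪 L) : L) - 1) / a‖ ≤ 1 := by
  rw [norm_div, norm_sub_rev]
  exact div_le_one_of_le₀ hy (norm_nonneg a)

noncomputable def higherUnitsToResidue {a : L} (ha : ‖a‖ < 1) :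
    higherUnits a →* Multiplicative (𝓀 L) where
  toFun y := .ofAdd (Ideal.Quotient.mk _ ⟨_, norm_sub_one_div_le_one y.2⟩)
  map_one' := by simp [Ideal.Quotient.eq_zero_iff_mem, mem_maxIdeal_iff]
  map_mul' y z := by
    rw [← ofAdd_add, ← map_add]
    refine congrArg _ (mk_eq_mk_iff.2 ?_)
    set Y := (((y : (𝒪 L)ˣ) : 𝒪 L) : L)
    set Z := (((z : (𝒪 L)ˣ) : 𝒪 L) : L)
    have h : (((((y * z : higherUnits a) : (𝒪 L)ˣ) : 𝒪 L) : L) - 1) / a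
        - ((Y - 1) / a + (Z - 1) / a) = (1 - Y) * (1 - Z) / a := by push_cast; ring
    rw [AddMemClass.coe_add, h, norm_div, norm_mul]
    calc ‖1 - Y‖ * ‖1 - Z‖ / ‖a‖ ≤ ‖a‖ * ‖a‖ / ‖a‖ := by gcongr; exacts [y.2, z.2]
      _ = ‖a‖ := mul_self_div_self _
      _ < 1 := ha

theorem higherUnitsToResidue_surjective {a : L} (ha0 : a ≠ 0) (ha : ‖a‖ < 1) :
    Function.Surjective (higherUnitsToResidue ha) := by
  intro c
  obtain ⟨x, hx⟩ := Ideal.Quotient.mk_surjective (Multiplicative.toAdd c)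
  have hax : ‖a * x‖ < 1 := by
    rw [norm_mul]
    exact (mul_le_of_le_one_right (norm_nonneg a) x.2).trans_lt ha
  have hnorm : ‖1 + a * x‖ = 1 := by
    rw [IsUltrametricDist.norm_add_eq_max_of_norm_ne_norm (by simpa using hax.ne'), norm_one,
      max_eq_left hax.le]
  set u : (𝒪 L)ˣ := (isUnit_of_norm_eq_one (x := ⟨1 + a * x, hnorm.le⟩) hnorm).unit
  have hu : ((u : 𝒪 L) : L) = 1 + a * x := rfl
  have hmem : u ∈ higherUnits a := by
    rw [mem_higherUnits, hu, sub_add_cancel_left, norm_neg, norm_mul]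
    exact mul_le_of_le_one_right (norm_nonneg a) x.2
  refine ⟨⟨u, hmem⟩, ?_⟩
  rw [← ofAdd_toAdd c, ← hx]
  refine congrArg (Multiplicative.ofAdd ∘ Ideal.Quotient.mk _) (Subtype.ext ?_)
  change (((u : 𝒪 L) : L) - 1) / a = x
  rw [hu, add_sub_cancel_left, mul_div_cancel_left₀ _ ha0]

section Uniformizer

variable {π : L} (hπ : IsUniformizer π)
include hπ

theorem ker_unitsMap_mk :
    (Units.map (Ideal.Quotient.mk (maxIdeal L)).toMonoidHom).ker = higherUnits π := by
  ext y
  rw [MonoidHom.mem_ker, mem_higherUnits, Units.ext_iff, Units.coe_map, Units.val_one,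
    ← map_one (Ideal.Quotient.mk (maxIdeal L)), RingHom.toMonoidHom_eq_coe,
    MonoidHom.coe_coe, mk_eq_mk_iff, norm_sub_rev]
  simpa using hπ.norm_lt_iff_le_mul (x := 1 - ((y : 𝒪 L) : L)) one_ne_zero

theorem index_higherUnits : (higherUnits π).index = Nat.card (𝓀 L) - 1 := by
  rw [← ker_unitsMap_mk hπ, Subgroup.index_ker, MonoidHom.range_eq_top.2 unitsMap_mk_surjective,
    Subgroup.card_top]
  exact Nat.card_units (𝓀 L)

theorem ker_higherUnitsToResidue {a : L} (ha0 : a ≠ 0) (ha : ‖a‖ < 1) :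
    (higherUnitsToResidue ha).ker = (higherUnits (π * a)).subgroupOf (higherUnits a) := by
  ext y
  rw [MonoidHom.mem_ker, Subgroup.mem_subgroupOf, mem_higherUnits, norm_mul,
    ← hπ.norm_lt_iff_le_mul ha0]
  change Multiplicative.ofAdd (Ideal.Quotient.mk _ _) = 1 ↔ _
  rw [ofAdd_eq_one, Ideal.Quotient.eq_zero_iff_mem, mem_maxIdeal_iff, norm_div,
    div_lt_one (norm_pos_iff.2 ha0), norm_sub_rev]

theorem relIndex_higherUnits {a : L} (ha0 : a ≠ 0) (ha : ‖a‖ < 1) :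
    (higherUnits (π * a)).relIndex (higherUnits a) = Nat.card (𝓀 L) := by
  rw [Subgroup.relIndex, ← ker_higherUnitsToResidue hπ ha0 ha, Subgroup.index_ker,
    MonoidHom.range_eq_top.2 (higherUnitsToResidue_surjective ha0 ha), Subgroup.card_top]
  exact Nat.card_congr Multiplicative.toAdd

theorem index_higherUnits_pow (n : ℕ) :
    (higherUnits (π ^ (n + 1))).index = (Nat.card (𝓀 L) - 1) * Nat.card (𝓀 L) ^ n := by
  induction n with
  | zero => simpa using index_higherUnits hπ
  | succ n ih =>
    have hπn : ‖π ^ (n + 1)‖ < 1 := by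
      rw [norm_pow]
      exact pow_lt_one₀ (norm_nonneg π) hπ.norm_lt_one n.succ_ne_zero
    have hle : ‖π * π ^ (n + 1)‖ ≤ ‖π ^ (n + 1)‖ := by
      rw [norm_mul]
      exact mul_le_of_le_one_left (norm_nonneg _) hπ.norm_lt_one.le
    rw [pow_succ' π (n + 1), ← Subgroup.relIndex_mul_index (higherUnits_mono hle),
      relIndex_higherUnits hπ (pow_ne_zero _ hπ.ne_zero) hπn, ih, pow_succ]
    ring

theorem ofReal_neg_log_norm_one_sub_eq_tsum {y : (𝒪 L)ˣ} (hy : y ≠ 1) :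
    ENNReal.ofReal (-Real.log ‖1 - ((y : 𝒪 L) : L)‖) =
      ∑' n : ℕ, (higherUnits (π ^ (n + 1)) : Set (𝒪 L)ˣ).indicator
        (fun _ => ENNReal.ofReal (-Real.log ‖π‖)) y := by
  have hne : 1 - ((y : 𝒪 L) : L) ≠ 0 :=
    sub_ne_zero.2 fun h => hy (Units.ext (Subtype.ext h.symm))
  obtain ⟨m, hm⟩ := hπ.exists_norm_eq_pow hne (norm_one_sub_coe_units_le_one y)
  have hmem : ∀ n : ℕ, y ∈ higherUnits (π ^ (n + 1)) ↔ n < m := fun n => by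
    rw [mem_higherUnits, hm, norm_pow,
      pow_le_pow_iff_right_of_lt_one₀ hπ.norm_pos hπ.norm_lt_one]
    omega
  classical
  simp only [Set.indicator_apply, SetLike.mem_coe, hmem]
  rw [tsum_eq_sum (s := Finset.range m) (fun n hn => if_neg (by simpa using hn)),
    Finset.sum_ite_of_true fun n hn => by simpa using hn,
    Finset.sum_const, Finset.card_range, nsmul_eq_mul, hm, Real.log_pow, ← mul_neg,
    ENNReal.ofReal_mul (Nat.cast_nonneg m), ENNReal.ofReal_natCast]

variable [MeasurableSpace L] [BorelSpace L] [Finite (𝓀 L)]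
  (μ : Measure (𝒪 L)ˣ) [IsProbabilityMeasure μ] [μ.IsMulLeftInvariant]

theorem measure_higherUnits_pow (n : ℕ) :
    μ (higherUnits (π ^ (n + 1))) =
      (((Nat.card (𝓀 L) - 1) * Nat.card (𝓀 L) ^ n : ℕ) : ℝ≥0∞)⁻¹ := by
  have hq : 1 < Nat.card (𝓀 L) := Finite.one_lt_card
  rw [← index_higherUnits_pow hπ n]
  refine Subgroup.measure_eq_inv_index μ _ (measurableSet_higherUnits _) ?_
  rw [index_higherUnits_pow hπ n]
  exact Nat.mul_ne_zero (by omega) (pow_ne_zero _ (by omega))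

theorem measure_singleton_one : μ {1} = 0 := by
  have hq : 1 < Nat.card (𝓀 L) := Finite.one_lt_card
  refine le_antisymm (ge_of_tendsto' ENNReal.tendsto_inv_nat_nhds_zero fun n => ?_) zero_le
  calc μ {1} ≤ μ (higherUnits (π ^ (n + 1))) :=
        measure_mono (Set.singleton_subset_iff.2 (higherUnits _).one_mem)
    _ = (((Nat.card (𝓀 L) - 1) * Nat.card (𝓀 L) ^ n : ℕ) : ℝ≥0∞)⁻¹ :=
        measure_higherUnits_pow hπ μ n
    _ ≤ (n : ℝ≥0∞)⁻¹ := by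
        refine ENNReal.inv_le_inv.2 (Nat.cast_le.2 ?_)
        exact (Nat.lt_pow_self hq).le.trans (Nat.le_mul_of_pos_left _ (by omega))

theorem lintegral_ofReal_neg_log_norm_one_sub :
    ∫⁻ y, ENNReal.ofReal (-Real.log ‖1 - ((y : 𝒪 L) : L)‖) ∂μ =
      ∑' n : ℕ, ENNReal.ofReal (-Real.log ‖π‖) *
        (((Nat.card (𝓀 L) - 1) * Nat.card (𝓀 L) ^ n : ℕ) : ℝ≥0∞)⁻¹ := by
  have hae : ∀ᵐ y ∂μ, y ∉ ({1} : Set (𝒪 L)ˣ) :=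
    measure_eq_zero_iff_ae_notMem.1 (measure_singleton_one hπ μ)
  rw [lintegral_congr_ae (hae.mono fun y hy => ofReal_neg_log_norm_one_sub_eq_tsum hπ hy),
    lintegral_tsum fun n =>
      (measurable_const.indicator (measurableSet_higherUnits _)).aemeasurable]
  simp_rw [lintegral_indicator_const (measurableSet_higherUnits _), measure_higherUnits_pow hπ μ]

theorem integral_neg_log_norm_one_sub :
    ∫ y, -Real.log ‖1 - ((y : 𝒪 L) : L)‖ ∂μ =
      -(Nat.card (𝓀 L) : ℝ) * Real.log ‖π‖ / ((Nat.card (𝓀 L) : ℝ) - 1) ^ 2 := by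
  have hq : 1 < Nat.card (𝓀 L) := Finite.one_lt_card
  have hc : 0 ≤ -Real.log ‖π‖ := neg_nonneg.2 (Real.log_nonpos (norm_nonneg π) hπ.norm_lt_one.le)
  have hnonneg : 0 ≤ᵐ[μ] fun y => -Real.log ‖1 - ((y : 𝒪 L) : L)‖ := ae_of_all _ fun y =>
    neg_nonneg.2 (Real.log_nonpos (norm_nonneg _) (norm_one_sub_coe_units_le_one y))
  rw [integral_eq_lintegral_of_nonneg_ae hnonneg
      (measurable_coe_units.const_sub 1).norm.log.neg.aestronglyMeasurable,
    lintegral_ofReal_neg_log_norm_one_sub hπ μ,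
    ENNReal.tsum_toReal_eq fun n => ENNReal.mul_ne_top ENNReal.ofReal_ne_top
      (ENNReal.inv_ne_top.2 (Nat.cast_ne_zero.2 (Nat.mul_ne_zero (by omega) (by positivity))))]
  simp_rw [ENNReal.toReal_mul, ENNReal.toReal_ofReal hc, ENNReal.toReal_inv,
    ENNReal.toReal_natCast]
  rw [tsum_mul_left]
  push_cast [Nat.cast_sub hq.le]
  rw [tsum_inv_sub_one_mul_pow (by exact_mod_cast hq)]
  ring

end Uniformizer

end ringOfIntegers

theorem statement14 (p : ℕ) [Fact p.Prime] (L : Type*) [NormedField L] [IsUltrametricDist L]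
    [Algebra ℚ_[p] L] [FiniteDimensional ℚ_[p] L]
    (hext : ∀ a : ℚ_[p], ‖algebraMap ℚ_[p] L a‖ = ‖a‖)
    [MeasurableSpace L] [BorelSpace L]
    (π : L) (hπ0 : π ≠ 0) (hπ1 : ‖π‖ < 1)
    (hunif : ∀ x : L, x ≠ 0 → ∃ n : ℤ, ‖x‖ = ‖π‖ ^ n)
    (q : ℕ) (hq : q = residueCard L)
    (μ : Measure (ringOfIntegers L)ˣ) [IsProbabilityMeasure μ] [μ.IsMulLeftInvariant] :
    (∫ y : (ringOfIntegers L)ˣ, -Real.log ‖1 - ((y : ringOfIntegers L) : L)‖ ∂μ) =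
      -(q : ℝ) * Real.log ‖π‖ / ((q : ℝ) - 1) ^ 2 := by
  let _ : NormedSpace ℚ_[p] L := { norm_smul_le a x := by rw [Algebra.smul_def, norm_mul, hext] }
  have : ProperSpace L := FiniteDimensional.proper ℚ_[p] L
  have : Finite (ringOfIntegers L ⧸ maxIdeal L) := ringOfIntegers.finite_residueField
  subst hq
  exact ringOfIntegers.integral_neg_log_norm_one_sub ⟨hπ0, hπ1, hunif⟩ μ
end
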